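/- Non-serializability of exhaustive set-based parallelism: there exists a program and an initial state for which a massively parallel set-based transition has no corresponding sequential computation; concretely, for the program {a ⇔ b∧c, a ⇔ b∧d}, the set-based state {a} transitions in one exhaustively parallel step to {b, c, d}, but no sequence of individual rule applications (in the set-based semantics) from {a} yields {b, c, d}. -/
import Mathlib


/-- The propositional constants of the counterexample program. -/
inductive K
  | a | b | c | d
deriving DecidableEq

open K

/-- Sequential set-based application of the rules `a ⇔ b ∧ c` and
`a ⇔ b ∧ d`. -/
def setStep (S T : Finset K) : Prop :=
  (a ∈ S ∧ T = (S \ {a}) ∪ {b, c}) ∨ (a ∈ S ∧ T = (S \ {a}) ∪ {b, d})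

lemma no_step_without_a {S T : Finset K} (h : a ∉ S) : ¬ setStep S T := by
  rintro (⟨hm, _⟩ | ⟨hm, _⟩) <;> exact h hm

lemma stuck {S T : Finset K} (h : a ∉ S) (hr : Relation.ReflTransGen setStep S T) :
    S = T := by
  rcases hr.cases_head with rfl | ⟨U, hs, _⟩
  · rfl
  · exact absurd hs (no_step_without_a h)

/-- Non-serializability of exhaustive set-based parallelism: the exhaustively
parallel step takes `{a}` to `{b, c, d}` (removed = `{a}`, added = union of
the two bodies), but no sequence of individual set-based rule applications
from `{a}` yields `{b, c, d}`. -/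
theorem chrmp_not_serializable :
    (({a} : Finset K) \ {a}) ∪ ({b, c} ∪ {b, d}) = {b, c, d} ∧
    ¬ Relation.ReflTransGen setStep {a} {b, c, d} := by
  constructor
  · decide
  · intro h
    rcases h.cases_head with heq | ⟨T, hs, hr⟩
    · exact absurd heq (by decide)
    · rcases hs with ⟨_, rfl⟩ | ⟨_, rfl⟩
      · have := stuck (by decide) hr
        exact absurd this (by decide)
      · have := stuck (by decide) hr
        exact absurd this (by decide)
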